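/- Let J, Q be real n×n matrices with Jᵀ = −J and Q positive definite. Then every eigenvalue λ ∈ ℂ of the matrix JQ (viewed as a complex matrix) satisfies Re(λ) = 0, and every eigenvalue of JQ is semisimple, i.e., the generalized eigenspace ker((JQ − λI)ⁿ) over ℂ equals the eigenspace ker(JQ − λI). -/

import Mathlib

/-!
`Q` defines the inner product `⟪u, v⟫_Q = u* Q v` on `ℂⁿ`, and `A = J Q` is skew-adjoint for it
because `Q A = Q J Q` is skew-Hermitian. So if `A x = μ x` with `x ≠ 0`, then
`μ ⟪x, x⟫_Q = ⟪x, A x⟫_Q = -⟪A x, x⟫_Q = -μ̄ ⟪x, x⟫_Q`, whence `Re μ = 0`. Then `A - μ` is again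
skew-adjoint, and a skew-adjoint `M` has no Jordan blocks: if `M² z = 0`, then `y = M z` satisfies
`⟪y, y⟫_Q = ⟪y, M z⟫_Q = -⟪M y, z⟫_Q = 0`, so `M z = 0`.
-/

open Matrix

/-- The complexification of a real matrix. -/
noncomputable def toC {n : ℕ} (A : Matrix (Fin n) (Fin n) ℝ) : Matrix (Fin n) (Fin n) ℂ :=
  A.map (fun a => (a : ℂ))

open scoped ComplexOrder

lemma toC_mul {n : ℕ} (A B : Matrix (Fin n) (Fin n) ℝ) : toC (A * B) = toC A * toC B := by
  ext i j
  simp [toC, mul_apply]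

lemma toC_neg {n : ℕ} (A : Matrix (Fin n) (Fin n) ℝ) : toC (-A) = -toC A := by
  ext i j
  simp [toC]

lemma toC_conjTranspose {n : ℕ} (A : Matrix (Fin n) (Fin n) ℝ) : (toC A)ᴴ = toC Aᵀ := by
  ext i j
  simp [toC]

lemma star_dotProduct_toC_mulVec {n : ℕ} {Q : Matrix (Fin n) (Fin n) ℝ} (hQ : Q.IsSymm)
    (v : Fin n → ℂ) :
    star v ⬝ᵥ (toC Q *ᵥ v) =
      (((fun i => (v i).re) ⬝ᵥ Q *ᵥ (fun i => (v i).re)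
        + (fun i => (v i).im) ⬝ᵥ Q *ᵥ (fun i => (v i).im) : ℝ) : ℂ) := by
  apply Complex.ext
  · simp [dotProduct, mulVec, toC, Finset.mul_sum, Complex.re_sum, ← Finset.sum_add_distrib,
      Complex.mul_re]
  · simp only [dotProduct, Pi.star_apply, RCLike.star_def, mulVec, toC, map_apply,
      Finset.mul_sum, Complex.im_sum, Complex.mul_im, Complex.conj_re, Complex.ofReal_re,
      Complex.ofReal_im, zero_mul, add_zero, Complex.conj_im, Complex.mul_re, sub_zero, neg_mul,
      Complex.ofReal_add, Complex.ofReal_sum, Complex.ofReal_mul, Complex.add_im, mul_zero,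
      Finset.sum_const_zero, Finset.sum_add_distrib, Finset.sum_neg_distrib, add_neg_eq_zero]
    rw [Finset.sum_comm]
    refine Finset.sum_congr rfl fun i _ => Finset.sum_congr rfl fun j _ => ?_
    rw [← transpose_apply Q j i, hQ.eq]
    ring

lemma toC_posDef {n : ℕ} {Q : Matrix (Fin n) (Fin n) ℝ} (hQ : Q.PosDef) : (toC Q).PosDef := by
  have hQs : Q.IsSymm := isHermitian_iff_isSymm.mp hQ.isHermitian
  refine .of_dotProduct_mulVec_pos ?_ fun v hv => ?_
  · rw [IsHermitian, toC_conjTranspose, hQs.eq]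
  set a : Fin n → ℝ := fun i => (v i).re
  set b : Fin n → ℝ := fun i => (v i).im
  rw [star_dotProduct_toC_mulVec hQs, Complex.zero_lt_real]
  have hQa : 0 ≤ a ⬝ᵥ Q *ᵥ a := hQ.posSemidef.dotProduct_mulVec_nonneg a
  have hQb : 0 ≤ b ⬝ᵥ Q *ᵥ b := hQ.posSemidef.dotProduct_mulVec_nonneg b
  have hab : a ≠ 0 ∨ b ≠ 0 := by
    by_contra! h
    exact hv (funext fun i => Complex.ext (congrFun h.1 i) (congrFun h.2 i))
  rcases hab with ha | hb
  · exact add_pos_of_pos_of_nonneg (hQ.dotProduct_mulVec_pos ha) hQb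
  · exact add_pos_of_nonneg_of_pos hQa (hQ.dotProduct_mulVec_pos hb)

section SkewAdjoint

variable {𝕜 ι : Type*} [RCLike 𝕜] [Fintype ι] {A B : Matrix ι ι 𝕜}

lemma star_dotProduct_mul_mulVec_eq_neg (hB : B.IsHermitian) (hBA : (B * A)ᴴ = -(B * A))
    (u w : ι → 𝕜) :
    star u ⬝ᵥ ((B * A) *ᵥ w) = -(star (A *ᵥ u) ⬝ᵥ (B *ᵥ w)) := by
  have hAB : Aᴴ * B = -(B * A) := by rw [← hBA, conjTranspose_mul, hB.eq]
  rw [star_mulVec, ← dotProduct_mulVec, mulVec_mulVec, hAB, neg_mulVec, dotProduct_neg, neg_neg]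

lemma re_eq_zero_of_mulVec_eq_smul (hB : B.PosDef) (hBA : (B * A)ᴴ = -(B * A)) {μ : 𝕜}
    {x : ι → 𝕜} (hx : x ≠ 0) (hAx : A *ᵥ x = μ • x) : RCLike.re μ = 0 := by
  have h := star_dotProduct_mul_mulVec_eq_neg hB.isHermitian hBA x x
  rw [← mulVec_mulVec, hAx, mulVec_smul, dotProduct_smul, star_smul, smul_dotProduct,
    smul_eq_mul, smul_eq_mul] at h
  have hsum : (μ + star μ) * (star x ⬝ᵥ (B *ᵥ x)) = 0 := by linear_combination h
  have hμ : μ + star μ = 0 :=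
    (mul_eq_zero.mp hsum).resolve_right (hB.dotProduct_mulVec_pos hx).ne'
  simpa [RCLike.star_def, RCLike.add_conj] using hμ

lemma mulVec_eq_zero_of_mulVec_mulVec_eq_zero (hB : B.PosDef) (hBA : (B * A)ᴴ = -(B * A))
    {z : ι → 𝕜} (hz : A *ᵥ (A *ᵥ z) = 0) : A *ᵥ z = 0 := by
  by_contra hy
  have h := star_dotProduct_mul_mulVec_eq_neg hB.isHermitian hBA (A *ᵥ z) z
  rw [← mulVec_mulVec, hz, star_zero, zero_dotProduct, neg_zero] at h
  exact (hB.dotProduct_mulVec_pos hy).ne' h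

lemma conjTranspose_mul_sub_smul_one [DecidableEq ι] (hB : B.IsHermitian)
    (hBA : (B * A)ᴴ = -(B * A)) {μ : 𝕜} (hμ : RCLike.re μ = 0) :
    (B * (A - μ • 1))ᴴ = -(B * (A - μ • 1)) := by
  have hconj : star μ = -μ := RCLike.ext (by simp [hμ]) (by simp)
  rw [mul_sub, Matrix.mul_smul, mul_one, conjTranspose_sub, conjTranspose_smul, hBA, hB.eq, hconj]
  module

end SkewAdjoint

lemma pow_succ_mulVec_eq_zero_iff {ι R : Type*} [Fintype ι] [DecidableEq ι] [Semiring R]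
    {M : Matrix ι ι R} (hM : ∀ z, M *ᵥ (M *ᵥ z) = 0 → M *ᵥ z = 0) (k : ℕ) (z : ι → R) :
    (M ^ (k + 1)) *ᵥ z = 0 ↔ M *ᵥ z = 0 := by
  induction k generalizing z with
  | zero => rw [zero_add, pow_one]
  | succ k ih =>
    rw [pow_succ, ← mulVec_mulVec, ih]
    exact ⟨hM z, fun h => by rw [h, mulVec_zero]⟩

theorem JQ_eigenvalues_imaginary_semisimple {n : ℕ} (J Q : Matrix (Fin n) (Fin n) ℝ)
    (hJ : Jᵀ = -J) (hQ : Q.PosDef) (μ : ℂ)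
    (heig : ∃ x : Fin n → ℂ, x ≠ 0 ∧ toC (J * Q) *ᵥ x = μ • x) :
    μ.re = 0 ∧
      ∀ x : Fin n → ℂ, ((toC (J * Q) - μ • 1) ^ n) *ᵥ x = 0 ↔ (toC (J * Q) - μ • 1) *ᵥ x = 0 := by
  obtain ⟨x, hx, hAx⟩ := heig
  have hB : (toC Q).PosDef := toC_posDef hQ
  have hBA : (toC Q * toC (J * Q))ᴴ = -(toC Q * toC (J * Q)) := by
    have hQs : Qᵀ = Q := (isHermitian_iff_isSymm.mp hQ.isHermitian).eq
    rw [← toC_mul, toC_conjTranspose, ← toC_neg, transpose_mul, transpose_mul, hJ, hQs]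
    simp only [Matrix.neg_mul, Matrix.mul_neg, Matrix.mul_assoc]
  have hμ : μ.re = 0 := re_eq_zero_of_mulVec_eq_smul hB hBA hx hAx
  refine ⟨hμ, ?_⟩
  cases n with
  | zero => exact absurd (Subsingleton.elim x 0) hx
  | succ k =>
    exact pow_succ_mulVec_eq_zero_iff (fun z => mulVec_eq_zero_of_mulVec_mulVec_eq_zero hB
      (conjTranspose_mul_sub_smul_one hB.isHermitian hBA hμ)) k
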